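/- Let k be a field of characteristic p > 0 and A a finite-dimensional symmetric k-algebra with symmetrising form ⟨·,·⟩. Then for every n ∈ ℕ the orthogonal space T_n(A)^⊥ is contained in Z(A) and is an ideal of the commutative ring Z(A): for every z ∈ Z(A) and every w ∈ T_n(A)^⊥ one has z·w ∈ T_n(A)^⊥. -/

import Mathlib

/-! Expanding `(∑ i, x i) ^ p ^ n` gives the sum of the products of all words of length `p ^ n`
in the letters `x i`. Rotating a word changes its product by a commutator, so modulo `KA` the
word products are invariant under the cyclic group of rotations, a `p`-group. Orbits of size
divisible by `p` contribute nothing in characteristic `p`, leaving the constant words, i.e.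
`∑ i, x i ^ p ^ n`. Applied to `a * b + -(b * a)`, this puts every commutator in `T_n(A)`, hence
`T_n(A)^⊥ ⊆ KA^⊥ = Z(A)`. Finally `T_n(A)` is stable under multiplication by central elements,
which gives the ideal property through `⟨z * w, x⟩ = ⟨w, x * z⟩`. -/

/-- `KA`: the `k`-linear span in `A` of all commutators `a*b - b*a`. -/
def commutatorSpan (k A : Type*) [Field k] [Ring A] [Algebra k A] : Submodule k A :=
  Submodule.span k {x : A | ∃ a b : A, x = a * b - b * a}

open MulAction Equiv.Perm

section
variable {p : ℕ} [Fact p.Prime] {G α M : Type*} [Group G] [MulAction G α] [Fintype α]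
  [AddCommGroup M]

theorem IsPGroup.sum_eq_zero_of_fixedPoints_eq_zero (hG : IsPGroup p G)
    (hM : ∀ m : M, p • m = 0) {F : α → M} (hF : ∀ (g : G) x, F (g • x) = F x)
    (hfix : ∀ x ∈ fixedPoints G α, F x = 0) : ∑ x, F x = 0 := by
  classical
  rw [← Fintype.sum_fiberwise (Quotient.mk (orbitRel G α)) F]
  refine Finset.sum_eq_zero fun ω _ => ?_
  induction ω using Quotient.inductionOn with | h x₀ => ?_
  have hfiber : ∀ x : {x // Quotient.mk (orbitRel G α) x = ⟦x₀⟧}, F x = F x₀ := by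
    rintro ⟨x, hx⟩
    obtain ⟨g, rfl⟩ := Quotient.exact hx
    exact hF g x₀
  have hcard :
      Nat.card {x // Quotient.mk (orbitRel G α) x = ⟦x₀⟧} = Nat.card (orbit G x₀) :=
    Nat.card_congr (Equiv.subtypeEquivRight fun x => Quotient.eq.trans (orbitRel_apply ..))
  rw [Finset.sum_congr rfl fun x _ => hfiber x, Finset.sum_const, Finset.card_univ,
    Fintype.card_eq_nat_card, hcard]
  obtain ⟨m, hm⟩ := hG.card_orbit x₀
  rcases m with _ | m
  · rw [pow_zero, Nat.card_eq_one_iff_unique] at hm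
    have hx₀ := subsingleton_orbit_iff_mem_fixedPoints.1 ((Set.subsingleton_coe _).1 hm.1)
    rw [hfix x₀ hx₀, smul_zero]
  · rw [hm, pow_succ, mul_nsmul, hM]

theorem IsPGroup.sum_eq_sum_fixedPoints [DecidablePred (· ∈ fixedPoints G α)]
    (hG : IsPGroup p G) (hM : ∀ m : M, p • m = 0) {F : α → M}
    (hF : ∀ (g : G) x, F (g • x) = F x) :
    ∑ x, F x = ∑ x with x ∈ fixedPoints G α, F x := by
  rw [← Finset.sum_filter_add_sum_filter_not Finset.univ (· ∈ fixedPoints G α),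
    add_eq_left, Finset.sum_filter]
  refine hG.sum_eq_zero_of_fixedPoints_eq_zero hM (fun g x => ?_)
    fun x hx => if_neg (not_not.2 hx)
  have : g • x ∈ fixedPoints G α ↔ x ∈ fixedPoints G α := by
    refine ⟨fun h => ?_, fun h => by rwa [h g]⟩
    rw [← inv_smul_smul g x, h g⁻¹]
    exact h
  simp only [this, hF]

theorem sum_eq_sum_fixedBy_of_pow_prime_pow_eq_one {c : G} {n : ℕ} (hc : c ^ p ^ n = 1)
    [DecidablePred (· ∈ fixedBy α c)] (hM : ∀ m : M, p • m = 0) {F : α → M}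
    (hF : ∀ x, F (c • x) = F x) :
    ∑ x, F x = ∑ x with x ∈ fixedBy α c, F x := by
  classical
  have hG : IsPGroup p (Subgroup.zpowers c) := by
    obtain ⟨m, -, hm⟩ := (Nat.dvd_prime_pow Fact.out).1 (orderOf_dvd_of_pow_eq_one hc)
    exact IsPGroup.of_card (by rw [Nat.card_zpowers, hm])
  have hzpow (j : ℤ) : ∀ x, F (c ^ j • x) = F x := by
    induction j using Int.induction_on with
    | zero => simp
    | succ i ih => intro x; rw [zpow_add_one, mul_smul, ih, hF]
    | pred i ih => intro x; rw [zpow_sub_one, mul_smul, ih, ← hF, smul_inv_smul]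
  have hfix (x : α) : x ∈ fixedPoints (Subgroup.zpowers c) α ↔ x ∈ fixedBy α c := by
    rw [mem_fixedPoints, ← mem_fixedBy_zpowers_iff_mem_fixedBy]
    exact ⟨fun h j => h ⟨c ^ j, j, rfl⟩, by rintro h ⟨_, j, rfl⟩; exact h j⟩
  rw [hG.sum_eq_sum_fixedPoints hM (by rintro ⟨_, j, rfl⟩; exact hzpow j)]
  exact Finset.sum_congr (Finset.filter_congr fun x _ => hfix x) fun _ _ => rfl

end

theorem finRotate_pow_self (n : ℕ) : finRotate n ^ n = 1 := by
  rcases n with _ | _ | n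
  · exact Subsingleton.elim _ _
  · exact finRotate_one
  · have : orderOf (finRotate (n + 2)) = n + 2 := by
      rw [isCycle_finRotate.orderOf, support_finRotate, Finset.card_univ, Fintype.card_fin]
    simpa [this] using pow_orderOf_eq_one (finRotate (n + 2))

theorem comp_finRotate_eq_self_iff {ι : Type*} {q : ℕ} [NeZero q] {w : Fin q → ι} :
    w ∘ finRotate q = w ↔ ∃ i, Function.const (Fin q) i = w := by
  obtain ⟨m, rfl⟩ := Nat.exists_eq_succ_of_ne_zero (NeZero.ne q)
  refine ⟨fun h => ⟨w 0, funext fun j => ?_⟩, by rintro ⟨i, rfl⟩; rfl⟩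
  induction j using Fin.induction with
  | zero => rfl
  | succ j ih =>
    calc w 0 = w j.castSucc := ih
      _ = w (finRotate _ j.castSucc) := (congrFun h _).symm
      _ = w j.succ := by rw [finRotate_apply, Fin.coeSucc_eq_succ]

theorem sum_pow_eq_sum_prod_ofFn {R ι : Type*} [Semiring R] [Fintype ι] (x : ι → R) (q : ℕ) :
    (∑ i, x i) ^ q = ∑ w : Fin q → ι, (List.ofFn (x ∘ w)).prod := by
  induction q with
  | zero => simp
  | succ q ih =>
    rw [pow_succ', ih, Finset.sum_mul_sum, ← Fintype.sum_prod_type',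
      ← (Fin.consEquiv fun _ => ι).sum_comp]
    refine Fintype.sum_congr _ _ fun ⟨i, w⟩ => ?_
    simp only [Fin.consEquiv_apply, List.ofFn_succ, Function.comp_apply, Fin.cons_zero,
      Fin.cons_succ, List.prod_cons]
    rfl

section
variable {k A : Type*} [Field k] [Ring A] [Algebra k A]

theorem mul_sub_mul_mem_commutatorSpan (a b : A) : a * b - b * a ∈ commutatorSpan k A :=
  Submodule.subset_span ⟨a, b, rfl⟩

theorem prod_ofFn_comp_finRotate_sub_mem_commutatorSpan {q : ℕ} (v : Fin q → A) :
    (List.ofFn (v ∘ finRotate q)).prod - (List.ofFn v).prod ∈ commutatorSpan k A := by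
  cases q with
  | zero => simp
  | succ m =>
    obtain ⟨a, t, rfl⟩ : ∃ a t, v = Fin.cons a t :=
      ⟨v 0, Fin.tail v, (Fin.cons_self_tail v).symm⟩
    have hrot : Fin.cons a t ∘ finRotate (m + 1) = Fin.snoc t a :=
      (Fin.snoc_eq_cons_rotate t a).symm
    rw [hrot, List.ofFn_succ', List.ofFn_succ]
    simp only [Fin.snoc_castSucc, Fin.snoc_last, Fin.cons_zero, Fin.cons_succ,
      List.concat_eq_append, List.prod_append, List.prod_cons, List.prod_nil, mul_one]
    exact mul_sub_mul_mem_commutatorSpan _ _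

theorem sum_pow_char_pow_sub_sum_pow_mem_commutatorSpan (p : ℕ) [Fact p.Prime] [CharP k p]
    (n : ℕ) {ι : Type*} [Fintype ι] (x : ι → A) :
    (∑ i, x i) ^ p ^ n - ∑ i, x i ^ p ^ n ∈ commutatorSpan k A := by
  classical
  have : NeZero (p ^ n) := ⟨pow_ne_zero _ (Fact.out : p.Prime).ne_zero⟩
  let F (w : Fin (p ^ n) → ι) : A ⧸ commutatorSpan k A :=
    (commutatorSpan k A).mkQ (List.ofFn (x ∘ w)).prod
  let c : (Equiv.Perm (Fin (p ^ n)))ᵈᵐᵃ := DomMulAct.mk (finRotate (p ^ n))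
  have hc : c ^ p ^ n = 1 := by
    rw [← DomMulAct.mk_pow, finRotate_pow_self]; rfl
  have hsmul (w : Fin (p ^ n) → ι) : c • w = w ∘ finRotate (p ^ n) := rfl
  have hM (m : A ⧸ commutatorSpan k A) : p • m = 0 := by
    rw [← Nat.cast_smul_eq_nsmul k, CharP.cast_eq_zero, zero_smul]
  have hF (w : Fin (p ^ n) → ι) : F (c • w) = F w :=
    (Submodule.Quotient.eq _).2 (prod_ofFn_comp_finRotate_sub_mem_commutatorSpan (x ∘ w))
  have hfixed : Finset.univ.filter (· ∈ fixedBy (Fin (p ^ n) → ι) c) =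
      Finset.univ.image (Function.const (Fin (p ^ n))) := by
    ext w
    simp [mem_fixedBy, hsmul, comp_finRotate_eq_self_iff]
  rw [← Submodule.Quotient.eq, sum_pow_eq_sum_prod_ofFn]
  simp only [← Submodule.mkQ_apply, map_sum]
  change ∑ w, F w = _
  rw [sum_eq_sum_fixedBy_of_pow_prime_pow_eq_one hc hM hF, hfixed,
    Finset.sum_image fun i _ j _ h => Function.const_injective h]
  refine Finset.sum_congr rfl fun i _ => ?_
  change (commutatorSpan k A).mkQ (List.ofFn fun _ => x i).prod = _
  rw [List.ofFn_const, List.prod_replicate]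

theorem mul_pow_sub_mul_pow_mem_commutatorSpan (a b : A) (m : ℕ) :
    (a * b) ^ m - (b * a) ^ m ∈ commutatorSpan k A := by
  cases m with
  | zero => simp
  | succ m =>
    convert mul_sub_mul_mem_commutatorSpan (k := k) a ((b * a) ^ m * b) using 1
    rw [pow_succ, pow_succ, ← mul_assoc, mul_pow_mul, mul_assoc, mul_assoc]

theorem commutator_pow_char_pow_mem_commutatorSpan (p : ℕ) [Fact p.Prime] [CharP k p] (n : ℕ)
    (a b : A) : (a * b - b * a) ^ p ^ n ∈ commutatorSpan k A := by
  have hneg : (-1 : A) ^ p ^ n = -1 := by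
    simpa using congrArg (algebraMap k A) (neg_one_pow_char_pow k p n)
  have hsum := sum_pow_char_pow_sub_sum_pow_mem_commutatorSpan (k := k) p n ![a * b, -(b * a)]
  rw [Fin.sum_univ_two, Fin.sum_univ_two] at hsum
  simp only [Matrix.cons_val_zero, Matrix.cons_val_one, neg_pow, hneg, neg_one_mul,
    ← sub_eq_add_neg] at hsum
  convert Submodule.add_mem _ hsum (mul_pow_sub_mul_pow_mem_commutatorSpan a b (p ^ n)) using 1
  abel

theorem mul_mem_commutatorSpan_of_mem_center {u z : A} (hu : u ∈ commutatorSpan k A)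
    (hz : z ∈ Subalgebra.center k A) : u * z ∈ commutatorSpan k A := by
  refine (Submodule.span_le.2 ?_ : commutatorSpan k A ≤ (commutatorSpan k A).comap
    (LinearMap.mulRight k z)) hu
  rintro _ ⟨a, b, rfl⟩
  have hza : a * z = z * a := Subalgebra.mem_center_iff.1 hz a
  show (a * b - b * a) * z ∈ commutatorSpan k A
  convert mul_sub_mul_mem_commutatorSpan (k := k) a (b * z) using 1
  simp only [sub_mul, mul_assoc, hza]

end

theorem Tn_perp_is_ideal_of_center_general
    (k A : Type*) [Field k] [Ring A] [Algebra k A]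
    (p : ℕ) [Fact p.Prime] [CharP k p]
    (B : A →ₗ[k] A →ₗ[k] k)
    (hsymm : ∀ a b : A, B a b = B b a)
    (hassoc : ∀ a b c : A, B (a * b) c = B a (b * c))
    (hnondeg : ∀ a : A, (∀ b : A, B a b = 0) → a = 0)
    (n : ℕ) :
    ({a : A | ∀ x : A, x ^ p ^ n ∈ commutatorSpan k A → B a x = 0} ⊆
        (Subalgebra.center k A : Set A)) ∧
    (∀ z ∈ Subalgebra.center k A,
      ∀ w ∈ {a : A | ∀ x : A, x ^ p ^ n ∈ commutatorSpan k A → B a x = 0},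
        z * w ∈ {a : A | ∀ x : A, x ^ p ^ n ∈ commutatorSpan k A → B a x = 0}) := by
  have hcycle (a b c : A) : B (a * b) c = B b (c * a) := by rw [hassoc, hsymm, hassoc]
  refine ⟨fun w hw => ?_, fun z hz w hw x hx => ?_⟩
  · refine Subalgebra.mem_center_iff.2 fun a => (sub_eq_zero.1 (hnondeg _ fun b => ?_)).symm
    rw [map_sub, LinearMap.sub_apply, hassoc, hcycle, ← map_sub]
    exact hw _ (commutator_pow_char_pow_mem_commutatorSpan p n a b)
  · rw [hcycle]
    apply hw
    rw [Commute.mul_pow (Subalgebra.mem_center_iff.1 hz x)]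
    exact mul_mem_commutatorSpan_of_mem_center hx (pow_mem hz _)

/-- For a finite-dimensional symmetric `k`-algebra `A` over a field of characteristic
`p > 0` and any `n`, the orthogonal space `T_n(A)^⊥` (with respect to the symmetrising
form) is contained in the centre `Z(A)` and is an ideal of `Z(A)`. -/
theorem Tn_perp_is_ideal_of_center
    (k A : Type*) [Field k] [Ring A] [Algebra k A] [FiniteDimensional k A]
    (p : ℕ) [Fact p.Prime] [CharP k p]
    (B : A →ₗ[k] A →ₗ[k] k)
    (hsymm : ∀ a b : A, B a b = B b a)
    (hassoc : ∀ a b c : A, B (a * b) c = B a (b * c))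
    (hnondeg : ∀ a : A, (∀ b : A, B a b = 0) → a = 0)
    (n : ℕ) :
    ({a : A | ∀ x : A, x ^ p ^ n ∈ commutatorSpan k A → B a x = 0} ⊆
        (Subalgebra.center k A : Set A)) ∧
    (∀ z ∈ Subalgebra.center k A,
      ∀ w ∈ {a : A | ∀ x : A, x ^ p ^ n ∈ commutatorSpan k A → B a x = 0},
        z * w ∈ {a : A | ∀ x : A, x ^ p ^ n ∈ commutatorSpan k A → B a x = 0}) :=
  Tn_perp_is_ideal_of_center_general k A p B hsymm hassoc hnondeg n
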